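/- For every real number M ≥ 0, every natural number k, and every real number z with |z| ≤ M, the degree-k Taylor polynomial of the exponential function satisfies |e^z − Σ_{j=0}^k z^j/j!| ≤ e^{2eM − k}, where e is Euler's number. -/

import Mathlib

open scoped Matrix Kronecker ComplexOrder

/-- The positive semidefinite square root (the definition Mathlib had in December 2024). -/
noncomputable def Matrix.PosSemidef.sqrt {n 𝕜 : Type*} [Fintype n] [DecidableEq n] [RCLike 𝕜]
    {A : Matrix n n 𝕜} (hA : A.PosSemidef) : Matrix n n 𝕜 :=
  hA.1.eigenvectorUnitary.1 * Matrix.diagonal (fun i => ((Real.sqrt (hA.1.eigenvalues i) : ℝ) : 𝕜)) *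
    (star hA.1.eigenvectorUnitary : Matrix n n 𝕜)

/-- The operator (spectral) norm of a square complex matrix. -/
noncomputable def opNorm {n : Type*} [Fintype n] [DecidableEq n] (A : Matrix n n ℂ) : ℝ :=
  ‖Matrix.toEuclideanCLM (𝕜 := ℂ) A‖

/-- The trace norm `‖A‖₁ = Tr √(Aᴴ A)` of a square complex matrix. -/
noncomputable def traceNorm {n : Type*} [Fintype n] [DecidableEq n] (A : Matrix n n ℂ) : ℝ :=
  ((Matrix.posSemidef_conjTranspose_mul_self A).sqrt.trace).re

/-- The (square-root) fidelity `F(ρ,σ) = ‖√ρ √σ‖₁` of positive semidefinite matrices. -/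
noncomputable def fidelity {n : Type*} [Fintype n] [DecidableEq n] {ρ σ : Matrix n n ℂ}
    (hρ : ρ.PosSemidef) (hσ : σ.PosSemidef) : ℝ :=
  traceNorm (hρ.sqrt * hσ.sqrt)

/-- Functional calculus for a Hermitian matrix: `f(A) = Σ_i f(λ_i) |v_i⟩⟨v_i|`. -/
noncomputable def matFun {n : Type*} [Fintype n] [DecidableEq n] {A : Matrix n n ℂ}
    (hA : A.IsHermitian) (f : ℝ → ℝ) : Matrix n n ℂ :=
  (hA.eigenvectorUnitary : Matrix n n ℂ) *
    Matrix.diagonal (fun i => (f (hA.eigenvalues i) : ℂ)) *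
    (star (hA.eigenvectorUnitary : Matrix n n ℂ))

/-- Partial trace over the first tensor factor. -/
noncomputable def ptraceA {a b : Type*} [Fintype a] (X : Matrix (a × b) (a × b) ℂ) :
    Matrix b b ℂ :=
  Matrix.of fun i j => ∑ k, X (k, i) (k, j)

/-- Partial trace over the second tensor factor. -/
noncomputable def ptraceB {a b : Type*} [Fintype b] (X : Matrix (a × b) (a × b) ℂ) :
    Matrix a a ℂ :=
  Matrix.of fun i j => ∑ k, X (i, k) (j, k)

/-- The outer product `|ψ⟩⟨φ|`. -/
def outer {a : Type*} (ψ φ : a → ℂ) : Matrix a a ℂ :=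
  Matrix.of fun i j => ψ i * (starRingEnd ℂ) (φ j)

/-- The Euclidean norm of a finitely supported complex vector. -/
noncomputable def evnorm {a : Type*} [Fintype a] (v : a → ℂ) : ℝ :=
  Real.sqrt (∑ i, ‖v i‖ ^ 2)

open Finset

theorem Real.hasSum_exp_sub_sum_range (x : ℝ) (n : ℕ) :
    HasSum (fun m => x ^ (m + n) / (m + n).factorial)
      (Real.exp x - ∑ m ∈ range n, x ^ m / m.factorial) := by
  rw [Real.exp_eq_exp_ℝ]
  exact (hasSum_nat_add_iff' n).mpr (NormedSpace.expSeries_div_hasSum_exp x)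

theorem Real.abs_exp_sub_sum_le_exp_abs_sub_sum (x : ℝ) (n : ℕ) :
    |Real.exp x - ∑ m ∈ range n, x ^ m / m.factorial|
      ≤ Real.exp |x| - ∑ m ∈ range n, |x| ^ m / m.factorial := by
  have h := Complex.norm_exp_sub_sum_le_exp_norm_sub_sum x n
  simp only [Complex.norm_real] at h
  exact_mod_cast h

/-- Chernoff-type tail bound: past index `n`, every term `t ^ m / m!` is at most
`c ^ (-n)` times the corresponding term of the series of `exp (c * t)`. -/
theorem Real.pow_mul_exp_sub_sum_range_le_exp_mul {t c : ℝ} (ht : 0 ≤ t) (hc : 1 ≤ c) (n : ℕ) :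
    c ^ n * (Real.exp t - ∑ m ∈ range n, t ^ m / m.factorial) ≤ Real.exp (c * t) := by
  have hterm (m : ℕ) : c ^ n * (t ^ (m + n) / (m + n).factorial)
      ≤ (c * t) ^ (m + n) / (m + n).factorial := by
    rw [mul_pow, mul_div_assoc]
    gcongr
    omega
  calc c ^ n * (Real.exp t - ∑ m ∈ range n, t ^ m / m.factorial)
      ≤ Real.exp (c * t) - ∑ m ∈ range n, (c * t) ^ m / m.factorial :=
        hasSum_le hterm ((Real.hasSum_exp_sub_sum_range t n).mul_left _)
          (Real.hasSum_exp_sub_sum_range _ n)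
    _ ≤ Real.exp (c * t) := sub_le_self _ (sum_nonneg fun m _ => by positivity)

theorem exp_taylor_remainder_general (M : ℝ) (k : ℕ) (z : ℝ) (hz : |z| ≤ M) :
    |Real.exp z - ∑ j ∈ Finset.range (k + 1), z ^ j / (j.factorial : ℝ)| ≤
      Real.exp (2 * Real.exp 1 * M - k) := by
  have he : 1 ≤ Real.exp 1 := Real.one_le_exp zero_le_one
  calc |Real.exp z - ∑ j ∈ range (k + 1), z ^ j / (j.factorial : ℝ)|
      ≤ Real.exp |z| - ∑ j ∈ range (k + 1), |z| ^ j / (j.factorial : ℝ) :=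
        Real.abs_exp_sub_sum_le_exp_abs_sub_sum z (k + 1)
    _ ≤ Real.exp (Real.exp 1 * |z|) / Real.exp 1 ^ (k + 1) := by
        rw [le_div_iff₀ (by positivity), mul_comm]
        exact Real.pow_mul_exp_sub_sum_range_le_exp_mul (abs_nonneg z) he (k + 1)
    _ = Real.exp (Real.exp 1 * |z| - (k + 1)) := by
        rw [Real.exp_sub, ← Nat.cast_add_one, Real.exp_one_pow]
    _ ≤ Real.exp (2 * Real.exp 1 * M - k) := by
        rw [Real.exp_le_exp]
        nlinarith [mul_le_mul_of_nonneg_left hz (zero_le_one.trans he), abs_nonneg z]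

/-- For `M ≥ 0`, `k : ℕ` and `|z| ≤ M`, the degree-`k` Taylor polynomial of the exponential
satisfies `|e^z − Σ_{j=0}^k z^j/j!| ≤ e^{2eM − k}`. -/
theorem exp_taylor_remainder (M : ℝ) (hM : 0 ≤ M) (k : ℕ) (z : ℝ) (hz : |z| ≤ M) :
    |Real.exp z - ∑ j ∈ Finset.range (k + 1), z ^ j / (j.factorial : ℝ)| ≤
      Real.exp (2 * Real.exp 1 * M - k) :=
  exp_taylor_remainder_general M k z hz
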